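/- arXiv:1709.04944 — 2 statements merged into one kernel-verified Lean document; each statement's English description precedes it below -/
import Mathlib

section
/- Work in the complex plane ℂ, and for p ∈ ℂ, θ ∈ ℝ let R_{p,θ}(z) = e^{−iθ}(z − p) + p denote the clockwise rotation about p by angle θ. Let k ≥ 1, let α_1, …, α_k > 0 with α_1 + ⋯ + α_k = 1, and let p_1, …, p_k ∈ ℂ. For β ∈ (0, 2π) let f_β := R_{p_1, α_1 β} ∘ ⋯ ∘ R_{p_k, α_k β}. If q : (0, 2π) → ℂ is any function such that q(β) is a fixed point of f_β for every β ∈ (0, 2π), then q(β) → α_1 p_1 + ⋯ + α_k p_k as β → 0⁺. -/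
open Filter

/-- `R p θ` is the clockwise rotation of the plane `ℂ` about `p` by angle `θ`. -/
noncomputable def R (p : ℂ) (θ : ℝ) (z : ℂ) : ℂ :=
  Complex.exp (-(θ : ℂ) * Complex.I) * (z - p) + p

/-- Translation part of a composition of rotations. -/
noncomputable def Cc : List (ℂ × ℝ) → ℂ
  | [] => 0
  | (a :: l) => Complex.exp (-(a.2 : ℂ) * Complex.I) * Cc l
      + a.1 * (1 - Complex.exp (-(a.2 : ℂ) * Complex.I))

lemma foldr_R (l : List (ℂ × ℝ)) (z : ℂ) :
    ((l.map fun pr => R pr.1 pr.2).foldr (· ∘ ·) id) z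
      = Complex.exp (-((l.map Prod.snd).sum : ℂ) * Complex.I) * z + Cc l := by
  induction l with
  | nil => simp [Cc]
  | cons a l ih =>
    simp only [List.map_cons, List.foldr_cons, Function.comp_apply, ih, Cc, R,
      List.sum_cons]
    push_cast
    rw [neg_add, add_mul, Complex.exp_add]
    ring

lemma tendsto_aux (a : ℝ) :
    Tendsto (fun β : ℝ => (1 - Complex.exp (-((a * β : ℝ) : ℂ) * Complex.I)) / β)
      (nhdsWithin 0 (Set.Ioi 0)) (nhds ((a : ℂ) * Complex.I)) := by
  have h1 : HasDerivAt (fun z : ℂ => (-(a : ℂ) * Complex.I) * z)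
      (-(a : ℂ) * Complex.I) 0 := by
    simpa using (hasDerivAt_id (0 : ℂ)).const_mul (-(a : ℂ) * Complex.I)
  have h2 : HasDerivAt (fun z : ℂ => 1 - Complex.exp ((-(a : ℂ) * Complex.I) * z))
      ((a : ℂ) * Complex.I) 0 := by
    have := (h1.cexp).const_sub 1
    simpa using this
  have h3 : HasDerivAt (fun β : ℝ => 1 - Complex.exp ((-(a : ℂ) * Complex.I) * β))
      ((a : ℂ) * Complex.I) 0 := h2.comp_ofReal
  have h4 := hasDerivAt_iff_tendsto_slope.mp h3
  have h5 : Tendsto (slope (fun β : ℝ => 1 - Complex.exp ((-(a : ℂ) * Complex.I) * β)) 0)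
      (nhdsWithin 0 (Set.Ioi 0)) (nhds ((a : ℂ) * Complex.I)) :=
    h4.mono_left (nhdsWithin_mono _ (by intro x hx; exact ne_of_gt hx))
  refine h5.congr fun β => ?_
  rw [slope_fun_def]
  have hco : (-((a * β : ℝ) : ℂ) * Complex.I) = (-(a : ℂ) * Complex.I) * β := by
    push_cast; ring
  rw [hco]
  simp [Complex.real_smul, div_eq_inv_mul]

lemma tendsto_Cc (l : List (ℂ × ℝ)) :
    Tendsto (fun β : ℝ => Cc (l.map fun pr => (pr.1, pr.2 * β)) / β)
      (nhdsWithin 0 (Set.Ioi 0))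
      (nhds ((l.map fun pr => pr.1 * (pr.2 : ℂ) * Complex.I).sum)) := by
  induction l with
  | nil => simpa [Cc] using tendsto_const_nhds
  | cons a l ih =>
    simp only [List.map_cons, Cc, List.sum_cons, add_div]
    rw [add_comm (a.1 * (a.2 : ℂ) * Complex.I)]
    refine Tendsto.add ?_ ?_
    · have h1 : Tendsto (fun β : ℝ => Complex.exp (-((a.2 * β : ℝ) : ℂ) * Complex.I))
          (nhdsWithin 0 (Set.Ioi 0)) (nhds 1) := by
        have hc : Continuous fun β : ℝ => Complex.exp (-((a.2 * β : ℝ) : ℂ) * Complex.I) := by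
          continuity
        have h0 := hc.tendsto 0
        simp only [mul_zero, Complex.ofReal_zero, neg_zero, zero_mul, Complex.exp_zero] at h0
        exact h0.mono_left nhdsWithin_le_nhds
      have h2 := h1.mul ih
      rw [one_mul] at h2
      refine h2.congr fun β => ?_
      rw [mul_div_assoc]
    · have h := (tendsto_aux a.2).const_mul a.1
      rw [← mul_assoc] at h
      refine h.congr fun β => ?_
      rw [mul_div_assoc]

/-- Note 4.3: the pivot point of the composition
`R_{p₁, α₁ β} ∘ ⋯ ∘ R_{p_k, α_k β}` converges to the weighted center of mass
`∑ αᵢ pᵢ` as `β → 0⁺`. -/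
theorem pivot_tendsto_center_of_mass
    (k : ℕ) (hk : 1 ≤ k) (α : Fin k → ℝ) (hα : ∀ i, 0 < α i)
    (hsum : ∑ i, α i = 1) (p : Fin k → ℂ) (q : ℝ → ℂ)
    (hq : ∀ β ∈ Set.Ioo (0 : ℝ) (2 * Real.pi),
      ((List.ofFn fun i : Fin k => R (p i) (α i * β)).foldr (· ∘ ·) id) (q β) = q β) :
    Tendsto q (nhdsWithin 0 (Set.Ioi 0)) (nhds (∑ i, (α i : ℂ) * p i)) := by
  -- the list of (center, weight) pairs
  set L : List (ℂ × ℝ) := List.ofFn (fun i => (p i, α i)) with hL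
  have hmap : ∀ β : ℝ, (List.ofFn fun i : Fin k => R (p i) (α i * β))
      = ((L.map fun pr => (pr.1, pr.2 * β)).map fun pr => R pr.1 pr.2) := by
    intro β
    rw [hL, List.map_ofFn, List.map_ofFn]
    rfl
  have hsnd : ∀ β : ℝ, (((L.map fun pr => (pr.1, pr.2 * β)).map Prod.snd).sum : ℝ) = β := by
    intro β
    simp [hL, List.map_ofFn, Function.comp, List.sum_ofFn, ← Finset.sum_mul, hsum]
  -- fixed point equation gives explicit formula for q
  have key : ∀ β ∈ Set.Ioo (0 : ℝ) (2 * Real.pi),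
      q β = Cc (L.map fun pr => (pr.1, pr.2 * β)) / (1 - Complex.exp (-(β : ℂ) * Complex.I)) := by
    intro β hβ
    have h1 := hq β hβ
    rw [hmap β, foldr_R, hsnd β] at h1
    have hne : 1 - Complex.exp (-(β : ℂ) * Complex.I) ≠ 0 := by
      rw [sub_ne_zero]
      intro h
      rw [eq_comm, Complex.exp_eq_one_iff] at h
      obtain ⟨n, hn⟩ := h
      have hI : (Complex.I : ℂ) ≠ 0 := Complex.I_ne_zero
      have h2 : (-(β : ℂ)) = n * (2 * Real.pi) := by
        have h3 : (-(β : ℂ)) * Complex.I = ((n : ℂ) * (2 * Real.pi)) * Complex.I := by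
          rw [hn]; ring
        exact mul_right_cancel₀ hI h3
      have h4 : -β = (n : ℝ) * (2 * Real.pi) := by
        have := congrArg Complex.re h2
        simpa using this
      have hβ0 := hβ.1
      have hβ2 := hβ.2
      have hn0 : (n : ℝ) < 0 := by
        by_contra hc
        push_neg at hc
        nlinarith [Real.pi_pos]
      have hn0' : n < 0 := by exact_mod_cast hn0
      have hn1 : (n : ℝ) ≤ -1 := by exact_mod_cast (by omega : n ≤ -1)
      nlinarith [Real.pi_pos]
    rw [eq_div_iff hne]
    linear_combination -h1
  -- limit computation
  have hnum := tendsto_Cc L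
  have hden : Tendsto (fun β : ℝ => (1 - Complex.exp (-(β : ℂ) * Complex.I)) / β)
      (nhdsWithin 0 (Set.Ioi 0)) (nhds Complex.I) := by
    have := tendsto_aux 1
    simpa using this
  have hdiv := hnum.div hden Complex.I_ne_zero
  have heq : ((L.map fun pr => pr.1 * (pr.2 : ℂ) * Complex.I).sum) / Complex.I
      = ∑ i, (α i : ℂ) * p i := by
    rw [hL, List.map_ofFn, List.sum_ofFn, Finset.sum_div]
    refine Finset.sum_congr rfl fun i _ => ?_
    simp only [Function.comp_apply]
    rw [mul_div_cancel_right₀ _ Complex.I_ne_zero, mul_comm]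
  rw [heq] at hdiv
  have hmem : Set.Ioo (0 : ℝ) (2 * Real.pi) ∈ nhdsWithin (0 : ℝ) (Set.Ioi 0) :=
    Ioo_mem_nhdsGT_of_mem ⟨le_refl 0, by positivity⟩
  refine hdiv.congr' ?_
  filter_upwards [hmem, self_mem_nhdsWithin] with β hβ hβ'
  have hβne : (β : ℂ) ≠ 0 := by
    exact_mod_cast ne_of_gt (hβ.1)
  simp only [Pi.div_apply]
  rw [key β hβ]
  rw [div_div_div_cancel_right₀ hβne]
end

section
/- Let a ≤ b be real numbers, h ≥ 0, and let f : ℝ → ℝ be convex on [a, b] with 0 ≤ f(t) ≤ h for all t ∈ [a, b]. Then the length of the graph of f over [a, b] — that is, the total variation on [a, b] of the map t ↦ (t, f(t)) ∈ ℝ² — satisfies b − a ≤ length ≤ (b − a) + 2h. In particular, as h → 0 the length of such a convex graph converges to b − a. -/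
/-!
The endpoints alone give the lower bound, since the plane distance dominates the horizontal one.
For the upper bound, `‖(x, y)‖₂ ≤ |x| + |y|` bounds the length by `(b - a)` plus the variation
of `f`. Along any partition, `f` decreases up to the partition point where it is least and
increases afterwards (this only uses quasiconvexity), so each partition sum telescopes to at most
`2h`.
-/

open Set Finset

theorem Finset.sum_range_abs_sub_eq_of_antitone_monotone {g : ℕ → ℝ} {k n : ℕ} (hkn : k ≤ n)
    (hanti : ∀ i < k, g (i + 1) ≤ g i) (hmono : ∀ i, k ≤ i → i < n → g i ≤ g (i + 1)) :
    ∑ i ∈ range n, |g (i + 1) - g i| = (g 0 - g k) + (g n - g k) := by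
  have hdown : ∑ i ∈ range k, |g (i + 1) - g i| = g 0 - g k := by
    rw [← sum_range_sub' g k]
    refine sum_congr rfl fun i hi => ?_
    rw [abs_sub_comm, abs_of_nonneg (sub_nonneg.2 (hanti i (mem_range.1 hi)))]
  have hup : ∑ i ∈ Ico k n, |g (i + 1) - g i| = g n - g k := by
    rw [← sum_Ico_sub g hkn]
    refine sum_congr rfl fun i hi => ?_
    obtain ⟨hki, hin⟩ := mem_Ico.1 hi
    exact abs_of_nonneg (sub_nonneg.2 (hmono i hki hin))
  rw [← sum_range_add_sum_Ico _ hkn, hdown, hup]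

theorem QuasiconvexOn.le_max_of_mem_Icc {β : Type*} [LinearOrder β] {s : Set ℝ} {f : ℝ → β}
    (hf : QuasiconvexOn ℝ s f) {x y z : ℝ} (hx : x ∈ s) (hz : z ∈ s) (hy : y ∈ Icc x z) :
    f y ≤ max (f x) (f z) :=
  ((hf _).ordConnected.out ⟨hx, le_max_left _ _⟩ ⟨hz, le_max_right _ _⟩ hy).2

theorem QuasiconvexOn.sum_range_abs_sub_le {s : Set ℝ} {f : ℝ → ℝ} (hf : QuasiconvexOn ℝ s f)
    {m M : ℝ} (hfs : ∀ t ∈ s, f t ∈ Icc m M) {u : ℕ → ℝ} (hu : Monotone u) (us : ∀ i, u i ∈ s)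
    (n : ℕ) : ∑ i ∈ range n, |f (u (i + 1)) - f (u i)| ≤ 2 * (M - m) := by
  obtain ⟨k, hk, hmin⟩ :=
    (range (n + 1)).exists_min_image (fun i => f (u i)) nonempty_range_add_one
  have hkn : k ≤ n := Nat.lt_succ_iff.1 (mem_range.1 hk)
  have hmin' : ∀ j ≤ n, f (u k) ≤ f (u j) := fun j hj =>
    hmin j (mem_range.2 (Nat.lt_succ_of_le hj))
  have hanti : ∀ i < k, f (u (i + 1)) ≤ f (u i) := fun i hik =>
    (hf.le_max_of_mem_Icc (us i) (us k) ⟨hu i.le_succ, hu hik⟩).trans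
      (max_le le_rfl (hmin' i (by omega)))
  have hmono : ∀ i, k ≤ i → i < n → f (u i) ≤ f (u (i + 1)) := fun i hki hin =>
    (hf.le_max_of_mem_Icc (us k) (us (i + 1)) ⟨hu hki, hu i.le_succ⟩).trans
      (max_le (hmin' (i + 1) hin) le_rfl)
  rw [sum_range_abs_sub_eq_of_antitone_monotone (g := fun i => f (u i)) hkn hanti hmono]
  have h0 := hfs _ (us 0)
  have hk := hfs _ (us k)
  have hn := hfs _ (us n)
  simp only [Set.mem_Icc] at h0 hk hn
  linarith

theorem QuasiconvexOn.eVariationOn_le {s : Set ℝ} {f : ℝ → ℝ} (hf : QuasiconvexOn ℝ s f)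
    {m M : ℝ} (hfs : ∀ t ∈ s, f t ∈ Icc m M) :
    eVariationOn f s ≤ ENNReal.ofReal (2 * (M - m)) := by
  refine iSup_le fun ⟨n, u, hu, us⟩ => ?_
  calc ∑ i ∈ range n, edist (f (u (i + 1))) (f (u i))
      = ENNReal.ofReal (∑ i ∈ range n, |f (u (i + 1)) - f (u i)|) := by
        rw [ENNReal.ofReal_sum_of_nonneg fun i _ => abs_nonneg _]
        simp only [edist_dist, Real.dist_eq]
    _ ≤ ENNReal.ofReal (2 * (M - m)) :=
        ENNReal.ofReal_le_ofReal (hf.sum_range_abs_sub_le hfs hu us n)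

theorem eVariationOn_le_add_of_edist_le {α E F G : Type*} [LinearOrder α] [PseudoEMetricSpace E]
    [PseudoEMetricSpace F] [PseudoEMetricSpace G] {f : α → E} {g : α → F} {h : α → G}
    {s : Set α}
    (hle : ∀ x ∈ s, ∀ y ∈ s, edist (f x) (f y) ≤ edist (g x) (g y) + edist (h x) (h y)) :
    eVariationOn f s ≤ eVariationOn g s + eVariationOn h s := by
  refine iSup_le fun ⟨n, u, hu, us⟩ => ?_
  calc ∑ i ∈ range n, edist (f (u (i + 1))) (f (u i))
      ≤ ∑ i ∈ range n, (edist (g (u (i + 1))) (g (u i)) + edist (h (u (i + 1))) (h (u i))) :=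
        sum_le_sum fun i _ => hle _ (us _) _ (us _)
    _ = ∑ i ∈ range n, edist (g (u (i + 1))) (g (u i)) +
          ∑ i ∈ range n, edist (h (u (i + 1))) (h (u i)) := sum_add_distrib
    _ ≤ eVariationOn g s + eVariationOn h s :=
        add_le_add (eVariationOn.sum_le hu us) (eVariationOn.sum_le hu us)

theorem EuclideanSpace.edist_pair_le_add (x y x' y' : ℝ) :
    edist ((WithLp.equiv 2 (Fin 2 → ℝ)).symm ![x, y])
        ((WithLp.equiv 2 (Fin 2 → ℝ)).symm ![x', y']) ≤ edist x x' + edist y y' := by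
  rw [edist_dist, edist_dist, edist_dist, ← ENNReal.ofReal_add dist_nonneg dist_nonneg]
  refine ENNReal.ofReal_le_ofReal ?_
  rw [EuclideanSpace.dist_eq, Real.sqrt_le_left (by positivity)]
  simp only [Fin.sum_univ_two, WithLp.equiv_symm_apply, Matrix.cons_val_zero, Matrix.cons_val_one,
    Matrix.cons_val_fin_one]
  nlinarith [mul_nonneg (dist_nonneg (x := x) (y := x')) (dist_nonneg (x := y) (y := y'))]

/-- Key estimate in the proof of Lemma 3.1: the length (total variation) of the
graph of a convex function `f` with `0 ≤ f ≤ h` over `[a, b]`, as a curve in the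
Euclidean plane, lies between `b - a` and `(b - a) + 2h`. -/
theorem length_of_convex_graph
    (a b h : ℝ) (hab : a ≤ b) (hh : 0 ≤ h) (f : ℝ → ℝ)
    (hconv : ConvexOn ℝ (Set.Icc a b) f)
    (hbound : ∀ t ∈ Set.Icc a b, 0 ≤ f t ∧ f t ≤ h) :
    ENNReal.ofReal (b - a) ≤
        eVariationOn
          (fun t : ℝ => (WithLp.equiv 2 (Fin 2 → ℝ)).symm ![t, f t]) (Set.Icc a b) ∧
      eVariationOn
          (fun t : ℝ => (WithLp.equiv 2 (Fin 2 → ℝ)).symm ![t, f t]) (Set.Icc a b) ≤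
        ENNReal.ofReal ((b - a) + 2 * h) := by
  set γ := fun t : ℝ => (WithLp.equiv 2 (Fin 2 → ℝ)).symm ![t, f t]
  have ha : a ∈ Icc a b := left_mem_Icc.2 hab
  have hb : b ∈ Icc a b := right_mem_Icc.2 hab
  have hid : eVariationOn id (Icc a b) = ENNReal.ofReal (b - a) := by
    rw [← inter_self (Icc a b)]; exact monotoneOn_id.eVariationOn_eq ha hb
  constructor
  · calc ENNReal.ofReal (b - a) = edist b a := by
          rw [edist_dist, Real.dist_eq, abs_of_nonneg (by linarith)]
      _ ≤ edist (γ b) (γ a) := PiLp.edist_apply_le (γ b) (γ a) 0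
      _ ≤ eVariationOn γ (Icc a b) := eVariationOn.edist_le γ hb ha
  · calc eVariationOn γ (Icc a b) ≤ eVariationOn id (Icc a b) + eVariationOn f (Icc a b) :=
          eVariationOn_le_add_of_edist_le fun x _ y _ => EuclideanSpace.edist_pair_le_add _ _ _ _
      _ ≤ ENNReal.ofReal (b - a) + ENNReal.ofReal (2 * (h - 0)) :=
          add_le_add hid.le (hconv.quasiconvexOn.eVariationOn_le hbound)
      _ = ENNReal.ofReal ((b - a) + 2 * h) := by
          rw [sub_zero, ENNReal.ofReal_add (by linarith) (by positivity)]
end
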